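/- arXiv:1703.00660 — 3 statements merged into one kernel-verified Lean document; each statement's English description precedes it below -/
import Mathlib

section
/- Suppose Δ : ℕ → ℝ has nonincreasing increments (Δ(k+1) - Δ(k) ≤ Δ(k) - Δ(k-1)) and 0 < q ≤ 1, b > 0. Define the one-step Bellman update for a traffic state: V'(k) = max(Δ(k), q·b + q·Δ(k-1) + (1-q)·Δ(k)) for k ≥ 1, and V'(0) = Δ(0). Then V' also has nonincreasing increments: V'(k+1) - V'(k) ≤ V'(k) - V'(k-1) for all k ≥ 1. -/
/-- One-step Bellman update for a non-idle traffic state preserves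
nonincreasing increments. -/
theorem bellman_update_traffic_concave (Δ : ℕ → ℝ)
    (hΔ : ∀ k, 1 ≤ k → Δ (k + 1) - Δ k ≤ Δ k - Δ (k - 1))
    (q b : ℝ) (hq : 0 < q) (hq1 : q ≤ 1) (hb : 0 < b)
    (V' : ℕ → ℝ) (hV0 : V' 0 = Δ 0)
    (hV : ∀ k, 1 ≤ k →
      V' k = max (Δ k) (q * b + q * Δ (k - 1) + (1 - q) * Δ k)) :
    ∀ k, 1 ≤ k → V' (k + 1) - V' k ≤ V' k - V' (k - 1) := by
  intro k hk
  match k, hk with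
  | 1, _ =>
    have h2 := hV 2 (by norm_num)
    have h1 := hV 1 (by norm_num)
    norm_num at h2 h1
    have c1 := hΔ 1 (by norm_num)
    norm_num at c1
    rw [h2, h1, hV0]
    have hA : Δ 1 ≤ max (Δ 1) (q * b + q * Δ 0 + (1 - q) * Δ 1) := le_max_left _ _
    have hB : q * b + q * Δ 0 + (1 - q) * Δ 1 ≤
        max (Δ 1) (q * b + q * Δ 0 + (1 - q) * Δ 1) := le_max_right _ _
    have hqd' : 0 ≤ (1 - q) * ((Δ 1 - Δ 0) - (Δ 2 - Δ 1)) :=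
      mul_nonneg (by linarith) (by linarith)
    have key : max (Δ 2) (q * b + q * Δ 1 + (1 - q) * Δ 2) ≤
        2 * max (Δ 1) (q * b + q * Δ 0 + (1 - q) * Δ 1) - Δ 0 := by
      refine max_le (by linarith) (by nlinarith)
    linarith
  | (n + 2), _ =>
    have h3 := hV (n + 3) (by omega)
    have h2 := hV (n + 2) (by omega)
    have h1 := hV (n + 1) (by omega)
    have c2 := hΔ (n + 2) (by omega)
    have c1 := hΔ (n + 1) (by omega)
    have e3 : n + 3 - 1 = n + 2 := rfl
    have e2 : n + 2 - 1 = n + 1 := rfl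
    have e1 : n + 1 - 1 = n := rfl
    have f3 : n + 2 + 1 = n + 3 := rfl
    have f2 : n + 1 + 1 = n + 2 := rfl
    rw [e3] at h3
    rw [e2] at h2
    rw [e1] at h1
    rw [f3, e2] at c2
    rw [f2, e1] at c1
    rw [show n + 2 + 1 = n + 3 from rfl, h3, h2, show (n + 2 - 1 : ℕ) = n + 1 from rfl, h1]
    set M := max (Δ (n + 2)) (q * b + q * Δ (n + 1) + (1 - q) * Δ (n + 2)) with hM
    have hA : Δ (n + 2) ≤ M := le_max_left _ _
    have hB : q * b + q * Δ (n + 1) + (1 - q) * Δ (n + 2) ≤ M := le_max_right _ _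
    have hqd : 0 ≤ q * ((Δ (n + 1) - Δ n) - (Δ (n + 2) - Δ (n + 1))) :=
      mul_nonneg hq.le (by linarith)
    have hqd' : 0 ≤ (1 - q) * ((Δ (n + 2) - Δ (n + 1)) - (Δ (n + 3) - Δ (n + 2))) :=
      mul_nonneg (by linarith) (by linarith)
    have keyA : max (Δ (n + 1)) (q * b + q * Δ n + (1 - q) * Δ (n + 1)) ≤
        2 * M - Δ (n + 3) :=
      max_le (by linarith) (by nlinarith)
    have keyB : max (Δ (n + 1)) (q * b + q * Δ n + (1 - q) * Δ (n + 1)) ≤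
        2 * M - (q * b + q * Δ (n + 2) + (1 - q) * Δ (n + 3)) :=
      max_le (by nlinarith) (by nlinarith)
    have key : max (Δ (n + 3)) (q * b + q * Δ (n + 2) + (1 - q) * Δ (n + 3)) ≤
        2 * M - max (Δ (n + 1)) (q * b + q * Δ n + (1 - q) * Δ (n + 1)) :=
      max_le (by linarith) (by linarith)
    linarith
end

section
/- Suppose Δ : ℕ → ℝ has nonincreasing increments and 0 < p ≤ 1, c > 0. Define the one-step Bellman update for the idle state: V'(k) = max(Δ(k), -c·p + p·Δ(k+1) + (1-p)·Δ(k)) for 0 ≤ k < K, and V'(K) = Δ(K). Then V' has nonincreasing increments on its domain: V'(k+1) - V'(k) ≤ V'(k) - V'(k-1) for 1 ≤ k ≤ K-1. -/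
/-- One-step Bellman update for the idle state preserves nonincreasing
increments on `{0,...,K}`. -/
theorem bellman_update_idle_concave (Δ : ℕ → ℝ)
    (hΔ : ∀ k, 1 ≤ k → Δ (k + 1) - Δ k ≤ Δ k - Δ (k - 1))
    (p c : ℝ) (hp : 0 < p) (hp1 : p ≤ 1) (hc : 0 < c) (K : ℕ)
    (V' : ℕ → ℝ) (hVK : V' K = Δ K)
    (hV : ∀ k, k < K →
      V' k = max (Δ k) (-c * p + p * Δ (k + 1) + (1 - p) * Δ k)) :
    ∀ k, 1 ≤ k → k ≤ K - 1 → V' (k + 1) - V' k ≤ V' k - V' (k - 1) := by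
  intro k hk hkK
  have hK2 : 2 ≤ K := by omega
  have hkK' : k + 1 ≤ K := by omega
  have hkltK : k < K := by omega
  have hΔk : Δ (k + 1) - Δ k ≤ Δ k - Δ (k - 1) := hΔ k hk
  have hΔk1 : Δ (k + 2) - Δ (k + 1) ≤ Δ (k + 1) - Δ k := by
    have := hΔ (k + 1) (by omega)
    simpa using this
  have hVk : V' k = max (Δ k) (-c * p + p * Δ (k + 1) + (1 - p) * Δ k) :=
    hV k hkltK
  have hVkm : V' (k - 1) =
      max (Δ (k - 1)) (-c * p + p * Δ k + (1 - p) * Δ (k - 1)) := by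
    have h := hV (k - 1) (by omega)
    have e : k - 1 + 1 = k := by omega
    rw [e] at h
    exact h
  -- V' k ≥ both branch values
  have hVkA : Δ k ≤ V' k := hVk ▸ le_max_left _ _
  have hVkB : -c * p + p * Δ (k + 1) + (1 - p) * Δ k ≤ V' k :=
    hVk ▸ le_max_right _ _
  -- Upper bound: V' (k+1) ≤ V' k + (Δ (k+1) - Δ k)
  have hub : V' (k + 1) ≤ V' k + (Δ (k + 1) - Δ k) := by
    rcases eq_or_lt_of_le hkK' with h | h
    · rw [h, hVK, ← h]
      linarith
    · rw [hV (k + 1) h]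
      apply max_le
      · linarith
      · have : -c * p + p * Δ (k + 1 + 1) + (1 - p) * Δ (k + 1) ≤
            (-c * p + p * Δ (k + 1) + (1 - p) * Δ k) + (Δ (k + 1) - Δ k) := by
          have e : k + 1 + 1 = k + 2 := by ring
          rw [e]
          nlinarith [hΔk1, hp.le, sub_nonneg.mpr hp1]
        linarith
  -- Lower bound: V' k ≥ V' (k-1) + (Δ (k+1) - Δ k)
  have hlb : V' (k - 1) + (Δ (k + 1) - Δ k) ≤ V' k := by
    rw [hVkm, ← max_add_add_right]
    apply max_le
    · linarith
    · nlinarith [hΔk, hp.le, sub_nonneg.mpr hp1]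
  linarith
end

section
/- Suppose V* : S × {0,...,K} → ℝ satisfies the marginal diminishing property in k (V*(s,k+1) - V*(s,k) ≤ V*(s,k) - V*(s,k-1) for all s and 1 ≤ k ≤ K-1), and the optimal action at a non-idle state (s,k), k ≥ 1, is a = 1 (D2D) iff β·Σ_{s'} p(s')(V*(s',k) - V*(s',k-1)) < b_s. Then the optimal policy is threshold in k: if the optimal action at (s,k) is 1 and k < K, then the optimal action at (s,k+1) is also 1. -/
/-- Proposition 1 (threshold structure): under the marginal-diminishing
property, if the optimal action at `(s,k)` is D2D (action 1) and `k < K`,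
then the optimal action at `(s,k+1)` is also D2D. -/
theorem optimal_policy_threshold {S : Type*} (fs : Finset S) (p : S → ℝ)
    (hp0 : ∀ s ∈ fs, 0 ≤ p s) (hp1 : ∑ s ∈ fs, p s = 1)
    (β : ℝ) (hβ : β ∈ Set.Ioo (0 : ℝ) 1) (K : ℕ)
    (Vstar : S → ℕ → ℝ)
    (hV : ∀ s, ∀ k, 1 ≤ k → k ≤ K - 1 →
      Vstar s (k + 1) - Vstar s k ≤ Vstar s k - Vstar s (k - 1))
    (b : S → ℝ) (hb : ∀ s, 0 < b s)
    (act : S → ℕ → ℕ)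
    (hact : ∀ s k, 1 ≤ k → (act s k = 1 ↔
      β * ∑ s' ∈ fs, p s' * (Vstar s' k - Vstar s' (k - 1)) < b s)) :
    ∀ s k, 1 ≤ k → k < K → act s k = 1 → act s (k + 1) = 1 := by
  intro s k hk hkK h1
  rw [hact s k hk] at h1
  rw [hact s (k+1) (by omega)]
  have hkK1 : k ≤ K - 1 := by omega
  have hsum : ∑ s' ∈ fs, p s' * (Vstar s' (k+1) - Vstar s' (k+1-1)) ≤
      ∑ s' ∈ fs, p s' * (Vstar s' k - Vstar s' (k-1)) := by
    apply Finset.sum_le_sum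
    intro i hi
    have := hV i k hk hkK1
    have hpi := hp0 i hi
    simp only [Nat.add_sub_cancel]
    nlinarith
  have hβ0 := hβ.1
  calc β * ∑ s' ∈ fs, p s' * (Vstar s' (k+1) - Vstar s' (k+1-1))
      ≤ β * ∑ s' ∈ fs, p s' * (Vstar s' k - Vstar s' (k-1)) := by
        exact mul_le_mul_of_nonneg_left hsum (le_of_lt hβ0)
    _ < b s := h1
end
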